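/- A smallest-order argument for centralizers: any differential-reflection operator 𝒟 = Σ a_i(z)(z∂z)^i + Σ b_j(z)(z∂z)^j s (finite sums, coefficients rational in z regular away from z = z^{-1}) that commutes with the Cherednik operator D_k has reflection-part order strictly smaller than its differential-part order (M ≤ N−1), and its leading coefficient a_N satisfies z∂z(a_N) = 0, hence a_N is constant. -/

import Mathlib

/-!
Test the commutator on the monomials `zⁿ`. Since `θ (u zᵐ) = (θ u + m u) zᵐ`, the operator `θⁱ`
acts on `u zᵐ` as `(θ + m)ⁱ` acts on `u`, a polynomial in `m` of degree `i` with leading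
coefficient `u`. Hence `[D_k, 𝒟] zⁿ = E(n) zⁿ + F(-n) z⁻ⁿ` with polynomials `E`, `F` whose
coefficients are holomorphic in `z`, and for `|z| > 1` the growth of `zⁿ` separates the two
parts, so `E = F = 0`. Because `θ s = -s θ`, a reflection term `b_d θᵈ s` contributes
`2 b_d` to the coefficient of `(-n)ᵈ⁺¹` in `F`; for `d ≥ N` nothing else reaches that degree,
which kills the reflection terms from the top down. Once they are gone, the coefficient of `nᴺ`
in `E` is `θ a_N`. Vanishing for `|z| > 1` spreads to the connected set `ℂ ∖ {0, 1, -1}` by the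
identity theorem, and `θ a_N = 0` there makes `a_N` constant.
-/

open Polynomial

/-- `f : ℂ → ℂ` is (the evaluation of) a Laurent polynomial. -/
def IsLaurent (f : ℂ → ℂ) : Prop :=
  ∃ (p : Polynomial ℂ) (n : ℕ), ∀ z : ℂ, z ≠ 0 → f z = p.eval z / z ^ n

/-- `g : ℂ → ℂ` is a rational function regular away from `z = 0` and `z = z⁻¹`,
i.e. an element of the localization `ℂ_Δ[z^±]` of `ℂ[z,z⁻¹]` at `Δ = z - z⁻¹`. -/
def IsLocLaurent (g : ℂ → ℂ) : Prop :=
  ∃ (p : Polynomial ℂ) (n m : ℕ), ∀ z : ℂ, z ≠ 0 → z ^ 2 ≠ 1 →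
    g z = p.eval z / (z ^ n * (z - z⁻¹) ^ m)

/-- The Euler operator `θ = z∂z`. -/
noncomputable def euler (g : ℂ → ℂ) : ℂ → ℂ := fun z => z * deriv g z

/-- The Cherednik operator `D_k = z∂z + k₁(1-z⁻¹)⁻¹(1-s) + 2k₂(1-z⁻²)⁻¹(1-s) - ρ(k)`. -/
noncomputable def cherednik (k1 k2 : ℂ) (f : ℂ → ℂ) : ℂ → ℂ := fun z =>
  z * deriv f z + k1 * ((f z - f z⁻¹) / (1 - z⁻¹))
    + 2 * k2 * ((f z - f z⁻¹) / (1 - (z⁻¹) ^ 2)) - (k1 + 2 * k2) / 2 * f z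

/-- The differential-reflection operator
`𝒟 = ∑_{i=0}^N aᵢ(z)(z∂z)ⁱ + ∑_{j=0}^M bⱼ(z)(z∂z)ʲ s`. -/
noncomputable def act (a b : ℕ → ℂ → ℂ) (N M : ℕ) (f : ℂ → ℂ) : ℂ → ℂ := fun z =>
  (∑ i ∈ Finset.range (N + 1), a i z * (euler^[i] f) z)
    + ∑ j ∈ Finset.range (M + 1), b j z * (euler^[j] (fun w => f w⁻¹)) z

open Filter Topology Set

def regLocus : Set ℂ := {0, 1, -1}ᶜ

lemma mem_regLocus {z : ℂ} : z ∈ regLocus ↔ z ≠ 0 ∧ z ^ 2 ≠ 1 := by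
  simp [regLocus, not_or]

lemma isOpen_regLocus : IsOpen regLocus :=
  (Set.toFinite _).isClosed.isOpen_compl

lemma isPreconnected_regLocus : IsPreconnected regLocus :=
  ((Set.toFinite _).countable.isConnected_compl_of_one_lt_rank (by simp)).isPreconnected

lemma inv_mem_regLocus {z : ℂ} (hz : z ∈ regLocus) : z⁻¹ ∈ regLocus := by
  simpa [regLocus, not_or, inv_eq_iff_eq_inv, and_comm, and_assoc] using hz

lemma mem_regLocus_of_one_lt_norm {z : ℂ} (hz : 1 < ‖z‖) : z ∈ regLocus := by
  rw [regLocus, mem_compl_iff]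
  rintro (rfl | rfl | rfl) <;> norm_num at hz

lemma IsLocLaurent.differentiableOn {g : ℂ → ℂ} (hg : IsLocLaurent g) :
    DifferentiableOn ℂ g regLocus := by
  obtain ⟨p, n, m, hp⟩ := hg
  refine DifferentiableOn.congr (f := fun z => p.eval z / (z ^ n * (z - z⁻¹) ^ m))
    (fun z hz => ?_) fun z hz => hp z (mem_regLocus.mp hz).1 (mem_regLocus.mp hz).2
  obtain ⟨hz₀, hz₁⟩ := mem_regLocus.mp hz
  have hΔ : z - z⁻¹ ≠ 0 := fun h => hz₁ (by field_simp at h; linear_combination h)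
  refine (p.differentiableAt.div (by fun_prop (disch := assumption)) ?_).differentiableWithinAt
  exact mul_ne_zero (pow_ne_zero _ hz₀) (pow_ne_zero _ hΔ)

section Euler

variable {s : Set ℂ} {f g : ℂ → ℂ} {z : ℂ}

lemma euler_add (hf : DifferentiableAt ℂ f z) (hg : DifferentiableAt ℂ g z) :
    euler (fun w => f w + g w) z = euler f z + euler g z := by
  simp only [euler, deriv_fun_add hf hg, mul_add]

lemma euler_const_mul (c : ℂ) : euler (fun w => c * f w) z = c * euler f z := by
  unfold euler
  rw [deriv_const_mul_field']
  ring

lemma euler_const_add (c : ℂ) : euler (fun w => c + f w) = euler f := by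
  unfold euler
  rw [deriv_const_add']

lemma euler_zero : euler (fun _ => (0 : ℂ)) = fun _ => 0 := by
  unfold euler
  simp

lemma euler_mul_zpow (hf : DifferentiableAt ℂ f z) (hz : z ≠ 0) (m : ℤ) :
    euler (fun w => f w * w ^ m) z = (euler f z + m * f z) * z ^ m := by
  rw [euler, deriv_fun_mul hf (differentiableAt_zpow.mpr (Or.inl hz)), deriv_zpow, euler,
    zpow_sub_one₀ hz]
  field_simp

lemma differentiableOn_euler (hf : DifferentiableOn ℂ f s) (hs : IsOpen s) :
    DifferentiableOn ℂ (euler f) s :=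
  differentiableOn_id.mul (hf.deriv hs)

lemma euler_congr (h : EqOn f g s) (hs : IsOpen s) : EqOn (euler f) (euler g) s :=
  fun z hz => by simp only [euler, h.deriv hs hz]

lemma euler_iterate_congr (h : EqOn f g s) (hs : IsOpen s) (i : ℕ) :
    EqOn (euler^[i] f) (euler^[i] g) s := by
  induction i with
  | zero => exact h
  | succ i ih => simpa only [Function.iterate_succ_apply'] using euler_congr ih hs

end Euler

-- Evaluated at `m`, `eulerPoly u i z` is `((θ + m)ⁱ u)(z)`.
noncomputable def eulerPoly : (ℂ → ℂ) → ℕ → ℂ → ℂ[X]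
  | u, 0, z => C (u z)
  | u, i + 1, z => eulerPoly (euler u) i z + X * eulerPoly u i z

section EulerPoly

variable {s : Set ℂ} {u v : ℂ → ℂ} {z : ℂ}

@[simp] lemma eulerPoly_zero (u : ℂ → ℂ) (z : ℂ) : eulerPoly u 0 z = C (u z) := rfl

lemma eulerPoly_succ (u : ℂ → ℂ) (i : ℕ) (z : ℂ) :
    eulerPoly u (i + 1) z = eulerPoly (euler u) i z + X * eulerPoly u i z := rfl

lemma eulerPoly_zero_fun (i : ℕ) (z : ℂ) : eulerPoly (fun _ => 0) i z = 0 := by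
  induction i with
  | zero => simp
  | succ i ih => simp [eulerPoly_succ, euler_zero, ih]

lemma eulerPoly_const_add (c : ℂ) (u : ℂ → ℂ) (i : ℕ) (z : ℂ) :
    eulerPoly (fun w => c + u w) i z = C c * X ^ i + eulerPoly u i z := by
  induction i with
  | zero => simp
  | succ i ih =>
    rw [eulerPoly_succ, eulerPoly_succ, euler_const_add, ih]
    ring

lemma natDegree_eulerPoly_le (u : ℂ → ℂ) (i : ℕ) (z : ℂ) : (eulerPoly u i z).natDegree ≤ i := by
  induction i generalizing u with
  | zero => simp
  | succ i ih =>
    rw [eulerPoly_succ]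
    refine (natDegree_add_le _ _).trans (max_le ((ih _).trans i.le_succ) ?_)
    exact natDegree_mul_le_of_le natDegree_X_le (ih u) |>.trans (by omega)

lemma coeff_eulerPoly_self (u : ℂ → ℂ) (i : ℕ) (z : ℂ) : (eulerPoly u i z).coeff i = u z := by
  induction i generalizing u with
  | zero => simp
  | succ i ih =>
    rw [eulerPoly_succ, coeff_add, coeff_X_mul, ih,
      coeff_eq_zero_of_natDegree_lt ((natDegree_eulerPoly_le _ i z).trans_lt i.lt_succ_self),
      zero_add]

lemma differentiableOn_eval_eulerPoly (hs : IsOpen s) (hu : DifferentiableOn ℂ u s) (i : ℕ)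
    (x : ℂ) : DifferentiableOn ℂ (fun w => (eulerPoly u i w).eval x) s := by
  induction i generalizing u with
  | zero => simpa using hu
  | succ i ih =>
    simp only [eulerPoly_succ, eval_add, eval_mul, eval_X]
    exact (ih (differentiableOn_euler hu hs)).add ((ih hu).const_mul x)

lemma euler_eval_eulerPoly (hs : IsOpen s) (hu : DifferentiableOn ℂ u s) (hz : z ∈ s) (i : ℕ)
    (x : ℂ) : euler (fun w => (eulerPoly u i w).eval x) z = (eulerPoly (euler u) i z).eval x := by
  induction i generalizing u with
  | zero => simp
  | succ i ih =>
    have hu' := differentiableOn_euler hu hs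
    simp only [eulerPoly_succ, eval_add, eval_mul, eval_X]
    rw [euler_add ((differentiableOn_eval_eulerPoly hs hu' i x).differentiableAt (hs.mem_nhds hz))
      (((differentiableOn_eval_eulerPoly hs hu i x).const_mul x).differentiableAt
        (hs.mem_nhds hz)), euler_const_mul, ih hu', ih hu]

lemma euler_iterate_mul_zpow_add (hs : IsOpen s) (hs₀ : (0 : ℂ) ∉ s)
    (hu : DifferentiableOn ℂ u s) (hv : DifferentiableOn ℂ v s) (m k : ℤ) (i : ℕ) :
    EqOn (euler^[i] (fun w => u w * w ^ m + v w * w ^ k))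
      (fun w => (eulerPoly u i w).eval (m : ℂ) * w ^ m + (eulerPoly v i w).eval (k : ℂ) * w ^ k)
      s := by
  induction i with
  | zero => intro z _; simp
  | succ i ih =>
    intro z hz
    have hz₀ : z ≠ 0 := fun h => hs₀ (h ▸ hz)
    have hdiff : ∀ (g : ℂ → ℂ) (x : ℂ), DifferentiableOn ℂ g s →
        DifferentiableAt ℂ (fun w => (eulerPoly g i w).eval x) z := fun g x hg =>
      (differentiableOn_eval_eulerPoly hs hg i x).differentiableAt (hs.mem_nhds hz)
    rw [Function.iterate_succ_apply', euler_congr ih hs hz,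
      euler_add (((hdiff u _ hu).fun_mul (differentiableAt_zpow.mpr (Or.inl hz₀))))
        (((hdiff v _ hv).fun_mul (differentiableAt_zpow.mpr (Or.inl hz₀)))),
      euler_mul_zpow (hdiff u _ hu) hz₀, euler_mul_zpow (hdiff v _ hv) hz₀,
      euler_eval_eulerPoly hs hu hz, euler_eval_eulerPoly hs hv hz]
    simp only [eulerPoly_succ, eval_add, eval_mul, eval_X]

end EulerPoly

noncomputable def symbol (c : ℕ → ℂ → ℂ) (K : ℕ) (z : ℂ) : ℂ[X] :=
  ∑ i ∈ Finset.range (K + 1), C (c i z) * X ^ i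

lemma coeff_symbol (c : ℕ → ℂ → ℂ) (K : ℕ) (z : ℂ) (l : ℕ) :
    (symbol c K z).coeff l = if l ≤ K then c l z else 0 := by
  simp [symbol]

lemma natDegree_symbol_le (c : ℕ → ℂ → ℂ) (K : ℕ) (z : ℂ) : (symbol c K z).natDegree ≤ K :=
  natDegree_sum_le_of_forall_le _ _ fun i hi =>
    natDegree_C_mul_X_pow_le _ i |>.trans (Nat.lt_succ_iff.mp (Finset.mem_range.mp hi))

lemma euler_eval_symbol {c : ℕ → ℂ → ℂ} {K : ℕ} {z : ℂ} (hc : ∀ i, DifferentiableAt ℂ (c i) z)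
    (x : ℂ) :
    euler (fun w => (symbol c K w).eval x) z = (symbol (fun i => euler (c i)) K z).eval x := by
  simp only [symbol, eval_finsetSum, eval_mul, eval_C, eval_pow, eval_X]
  rw [euler, deriv_fun_sum fun i _ => (hc i).mul_const _, Finset.mul_sum]
  refine Finset.sum_congr rfl fun i _ => ?_
  rw [deriv_mul_const (hc i), euler, mul_assoc]

lemma differentiableOn_eval_symbol {c : ℕ → ℂ → ℂ} {K : ℕ} {s : Set ℂ}
    (hc : ∀ i, DifferentiableOn ℂ (c i) s) (x : ℂ) :
    DifferentiableOn ℂ (fun w => (symbol c K w).eval x) s := by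
  simp only [symbol, eval_finsetSum, eval_mul, eval_C, eval_pow, eval_X]
  exact DifferentiableOn.fun_sum fun i _ => (hc i).mul_const _

noncomputable def actPoly (a b : ℕ → ℂ → ℂ) (N M : ℕ) (u v : ℂ → ℂ) (z : ℂ) : ℂ[X] :=
  ∑ i ∈ Finset.range (N + 1), C (a i z) * eulerPoly u i z
    + ∑ j ∈ Finset.range (M + 1), C (b j z) * eulerPoly (fun w => v w⁻¹) j z

lemma differentiableOn_comp_inv {v : ℂ → ℂ} (hv : DifferentiableOn ℂ v regLocus) :
    DifferentiableOn ℂ (fun w => v w⁻¹) regLocus :=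
  hv.comp (differentiableOn_inv.mono fun _ hw => (mem_regLocus.mp hw).1)
    fun _ hw => inv_mem_regLocus hw

lemma sum_mul_euler_iterate_mul_zpow_add {s : Set ℂ} (hs : IsOpen s) (hs₀ : (0 : ℂ) ∉ s)
    {u v : ℂ → ℂ} (hu : DifferentiableOn ℂ u s) (hv : DifferentiableOn ℂ v s)
    (a : ℕ → ℂ → ℂ) (K : ℕ) (c d : ℂ) (m : ℤ) {z : ℂ} (hz : z ∈ s) :
    ∑ i ∈ Finset.range (K + 1),
        a i z * euler^[i] (fun w => (c + u w) * w ^ m + (d + v w) * w ^ (-m)) z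
      = (C c * symbol a K z + ∑ i ∈ Finset.range (K + 1), C (a i z) * eulerPoly u i z).eval
            (m : ℂ) * z ^ m
        + (C d * symbol a K z + ∑ i ∈ Finset.range (K + 1), C (a i z) * eulerPoly v i z).eval
            (-(m : ℂ)) * z ^ (-m) := by
  have hu' : DifferentiableOn ℂ (fun w => c + u w) s := (differentiableOn_const c).add hu
  have hv' : DifferentiableOn ℂ (fun w => d + v w) s := (differentiableOn_const d).add hv
  simp only [symbol, Finset.mul_sum, ← Finset.sum_add_distrib, eval_finsetSum, Finset.sum_mul]
  refine Finset.sum_congr rfl fun i _ => ?_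
  rw [euler_iterate_mul_zpow_add hs hs₀ hu' hv' m (-m) i hz]
  simp only [eulerPoly_const_add, eval_add, eval_mul, eval_C, eval_pow, eval_X, Int.cast_neg]
  ring

lemma act_mul_zpow_add (a b : ℕ → ℂ → ℂ) (N M : ℕ) {u v : ℂ → ℂ}
    (hu : DifferentiableOn ℂ u regLocus) (hv : DifferentiableOn ℂ v regLocus) (c d : ℂ) (m : ℤ)
    {z : ℂ} (hz : z ∈ regLocus) :
    act a b N M (fun w => (c + u w) * w ^ m + (d + v w) * w ^ (-m)) z
      = (C c * symbol a N z + C d * symbol b M z + actPoly a b N M u v z).eval (m : ℂ) * z ^ m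
        + (C d * symbol a N z + C c * symbol b M z + actPoly a b N M v u z).eval (-(m : ℂ))
          * z ^ (-m) := by
  have h₀ : (0 : ℂ) ∉ regLocus := fun h => (mem_regLocus.mp h).1 rfl
  have hrefl : (fun w => (fun w => (c + u w) * w ^ m + (d + v w) * w ^ (-m)) w⁻¹)
      = fun w => (d + v w⁻¹) * w ^ m + (c + u w⁻¹) * w ^ (-m) := by
    funext w
    simp only [inv_zpow', neg_neg]
    ring
  rw [act, hrefl, sum_mul_euler_iterate_mul_zpow_add isOpen_regLocus h₀ hu hv a N c d m hz,
    sum_mul_euler_iterate_mul_zpow_add isOpen_regLocus h₀ (differentiableOn_comp_inv hv)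
      (differentiableOn_comp_inv hu) b M d c m hz]
  simp only [actPoly, eval_add]
  ring

noncomputable def cherednikWeight (k1 k2 z : ℂ) : ℂ := k1 / (1 - z⁻¹) + 2 * k2 / (1 - z⁻¹ ^ 2)

section Cherednik

variable {k1 k2 : ℂ}

lemma cherednik_eq (f : ℂ → ℂ) (z : ℂ) :
    cherednik k1 k2 f z
      = euler f z + cherednikWeight k1 k2 z * (f z - f z⁻¹) - (k1 + 2 * k2) / 2 * f z := by
  simp only [cherednik, euler, cherednikWeight]
  ring

lemma cherednik_congr {f g : ℂ → ℂ} (h : EqOn f g regLocus) {z : ℂ} (hz : z ∈ regLocus) :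
    cherednik k1 k2 f z = cherednik k1 k2 g z := by
  rw [cherednik_eq, cherednik_eq, euler_congr h isOpen_regLocus hz, h hz,
    h (inv_mem_regLocus hz)]

lemma differentiableOn_cherednikWeight : DifferentiableOn ℂ (cherednikWeight k1 k2) regLocus := by
  intro w hw
  obtain ⟨hw₀, hw₁⟩ := mem_regLocus.mp hw
  have h₁ : 1 - w⁻¹ ≠ 0 := by
    rw [sub_ne_zero, ne_comm, inv_ne_one]
    rintro rfl
    simp at hw₁
  have h₂ : 1 - w⁻¹ ^ 2 ≠ 0 := by
    rwa [sub_ne_zero, ne_comm, inv_pow, inv_ne_one]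
  apply DifferentiableAt.differentiableWithinAt
  unfold cherednikWeight
  fun_prop (disch := assumption)

lemma cherednik_mul_zpow_add {A B : ℂ → ℂ} {z : ℂ} (hA : DifferentiableAt ℂ A z)
    (hB : DifferentiableAt ℂ B z) (hz : z ≠ 0) (m : ℤ) :
    cherednik k1 k2 (fun w => A w * w ^ m + B w * w ^ (-m)) z
      = (euler A z + m * A z + cherednikWeight k1 k2 z * (A z - B z⁻¹)
            - (k1 + 2 * k2) / 2 * A z) * z ^ m
        + (euler B z - m * B z + cherednikWeight k1 k2 z * (B z - A z⁻¹)
            - (k1 + 2 * k2) / 2 * B z) * z ^ (-m) := by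
  have hzpow : ∀ k : ℤ, DifferentiableAt ℂ (fun w : ℂ => w ^ k) z :=
    fun k => differentiableAt_zpow.mpr (Or.inl hz)
  rw [cherednik_eq, euler_add (hA.fun_mul (hzpow m)) (hB.fun_mul (hzpow (-m))),
    euler_mul_zpow hA hz, euler_mul_zpow hB hz]
  simp only [inv_zpow', neg_neg, Int.cast_neg]
  ring

-- Stated in the shape of `act_mul_zpow_add`.
lemma cherednik_pow (n : ℕ) :
    cherednik k1 k2 (fun w => w ^ n)
      = fun w => ((n - (k1 + 2 * k2) / 2) + cherednikWeight k1 k2 w) * w ^ (n : ℤ)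
        + (0 + -cherednikWeight k1 k2 w) * w ^ (-(n : ℤ)) := by
  funext w
  have hθ : euler (fun w : ℂ => w ^ n) w = n * w ^ n := by
    rw [euler, deriv_pow_field]
    cases n with
    | zero => simp
    | succ n => rw [Nat.add_sub_cancel, pow_succ]; push_cast; ring
  simp only [cherednik_eq, hθ, zpow_neg, zpow_natCast, inv_pow]
  ring

end Cherednik

/- `[D_k, 𝒟] zⁿ = commPolyPos(n) zⁿ + commPolyNeg(-n) z⁻ⁿ`: the variable of `commPolyNeg` is
the eigenvalue `-n` of `θ` on `z⁻ⁿ`. -/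
noncomputable def commPolyPos (k1 k2 : ℂ) (a b : ℕ → ℂ → ℂ) (N M : ℕ) (z : ℂ) : ℂ[X] :=
  symbol (fun i => euler (a i)) N z + C (cherednikWeight k1 k2 z) * symbol a N z
    - C (cherednikWeight k1 k2 z) * (symbol b M z⁻¹).comp (-X)
    - actPoly a b N M (cherednikWeight k1 k2) (fun w => -cherednikWeight k1 k2 w) z

noncomputable def commPolyNeg (k1 k2 : ℂ) (a b : ℕ → ℂ → ℂ) (N M : ℕ) (z : ℂ) : ℂ[X] :=
  symbol (fun j => euler (b j)) M z + (2 * X + C (cherednikWeight k1 k2 z)) * symbol b M z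
    - C (cherednikWeight k1 k2 z) * (symbol a N z⁻¹).comp (-X)
    - actPoly a b N M (fun w => -cherednikWeight k1 k2 w) (cherednikWeight k1 k2) z

lemma cherednik_act_sub_act_cherednik_pow {k1 k2 : ℂ} {a b : ℕ → ℂ → ℂ} {N M : ℕ}
    (ha : ∀ i, DifferentiableOn ℂ (a i) regLocus) (hb : ∀ j, DifferentiableOn ℂ (b j) regLocus)
    {z : ℂ} (hz : z ∈ regLocus) (n : ℕ) :
    cherednik k1 k2 (act a b N M (fun w => w ^ n)) z
        - act a b N M (cherednik k1 k2 (fun w => w ^ n)) z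
      = (commPolyPos k1 k2 a b N M z).eval (n : ℂ) * z ^ (n : ℤ)
        + (commPolyNeg k1 k2 a b N M z).eval (-(n : ℂ)) * z ^ (-(n : ℤ)) := by
  have hφ := differentiableOn_cherednikWeight (k1 := k1) (k2 := k2)
  have hz' : regLocus ∈ 𝓝 z := isOpen_regLocus.mem_nhds hz
  set A : ℂ → ℂ := fun w => (symbol a N w).eval (n : ℂ)
  set B : ℂ → ℂ := fun w => (symbol b M w).eval (-(n : ℂ))
  have hact : EqOn (act a b N M (fun w => w ^ n))
      (fun w => A w * w ^ (n : ℤ) + B w * w ^ (-(n : ℤ))) regLocus := fun w hw => by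
    simpa [actPoly, eulerPoly_zero_fun] using
      act_mul_zpow_add a b N M (differentiableOn_const 0) (differentiableOn_const 0) 1 0 n hw
  rw [cherednik_congr hact hz, cherednik_pow,
    cherednik_mul_zpow_add ((differentiableOn_eval_symbol ha _).differentiableAt hz')
      ((differentiableOn_eval_symbol hb _).differentiableAt hz') (mem_regLocus.mp hz).1,
    act_mul_zpow_add (v := fun w => -cherednikWeight k1 k2 w) a b N M hφ hφ.neg _ _ _ hz,
    euler_eval_symbol (fun i => (ha i).differentiableAt hz'),
    euler_eval_symbol (fun j => (hb j).differentiableAt hz')]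
  simp only [commPolyPos, commPolyNeg, eval_add, eval_sub, eval_mul, eval_C, eval_X,
    eval_comp, eval_neg, eval_ofNat, neg_neg, Int.cast_natCast]
  ring

lemma tendsto_eval_natCast_mul_pow (p : ℂ[X]) {r : ℂ} (hr : ‖r‖ < 1) :
    Tendsto (fun n : ℕ => p.eval (n : ℂ) * r ^ n) atTop (𝓝 0) := by
  simp_rw [eval_eq_sum_range, Finset.sum_mul, mul_assoc]
  simpa using tendsto_finsetSum _ fun i _ =>
    (summable_pow_mul_geometric_of_norm_lt_one i hr).tendsto_atTop_zero.const_mul (p.coeff i)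

lemma eq_zero_of_tendsto_eval_natCast {p : ℂ[X]}
    (h : Tendsto (fun n : ℕ => p.eval (n : ℂ)) atTop (𝓝 0)) : p = 0 := by
  rcases lt_or_ge 0 p.degree with hdeg | hdeg
  · refine absurd h.norm (not_tendsto_nhds_of_tendsto_atTop ?_ _)
    exact tendsto_norm_atTop p hdeg (by simpa using tendsto_natCast_atTop_atTop)
  · rw [eq_C_of_degree_le_zero hdeg] at h ⊢
    simpa using h

lemma eq_zero_of_eval_mul_zpow_add_eq_zero {z : ℂ} (hz : 1 < ‖z‖) {P Q : ℂ[X]}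
    (h : ∀ n : ℕ, P.eval (n : ℂ) * z ^ (n : ℤ) + Q.eval (-(n : ℂ)) * z ^ (-(n : ℤ)) = 0) :
    P = 0 ∧ Q = 0 := by
  have hz₀ : z ≠ 0 := by rintro rfl; simp at hz; linarith
  have hr : ‖z⁻¹ ^ 2‖ < 1 := by
    rw [norm_pow, norm_inv]
    exact pow_lt_one₀ (by positivity) (inv_lt_one_of_one_lt₀ hz) two_ne_zero
  have hP : P = 0 := by
    refine eq_zero_of_tendsto_eval_natCast ?_
    have := (tendsto_eval_natCast_mul_pow (Q.comp (-X)) hr).neg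
    rw [neg_zero] at this
    refine this.congr fun n => ?_
    have hn := h n
    rw [zpow_neg, zpow_natCast] at hn
    rw [eval_comp, eval_neg, eval_X, ← pow_mul, inv_pow, mul_comm 2, pow_mul]
    field_simp at hn ⊢
    linear_combination -hn
  refine ⟨hP, eq_zero_of_infinite_isRoot Q ?_⟩
  refine Set.infinite_of_injective_forall_mem (f := fun n : ℕ => -(n : ℂ))
    (neg_injective.comp Nat.cast_injective) fun n => ?_
  simpa [hP, hz₀] using h n

lemma eqOn_zero_of_one_lt_norm {g : ℂ → ℂ} (hg : DifferentiableOn ℂ g regLocus)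
    (h : ∀ z, 1 < ‖z‖ → g z = 0) : EqOn g 0 regLocus := by
  have hnhds : {z : ℂ | 1 < ‖z‖} ∈ 𝓝 (2 : ℂ) :=
    (isOpen_lt continuous_const continuous_norm).mem_nhds (by norm_num)
  exact (hg.analyticOnNhd isOpen_regLocus).eqOn_zero_of_preconnected_of_eventuallyEq_zero
    isPreconnected_regLocus (mem_regLocus_of_one_lt_norm (by norm_num))
    (Filter.eventually_of_mem hnhds h)

lemma coeff_sum_C_mul_eulerPoly_eq_zero {s : Finset ℕ} {c : ℕ → ℂ} (u : ℂ → ℂ) (z : ℂ) {k : ℕ}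
    (h : ∀ j ∈ s, c j = 0 ∨ j < k) : (∑ j ∈ s, C (c j) * eulerPoly u j z).coeff k = 0 := by
  rw [finsetSum_coeff]
  refine Finset.sum_eq_zero fun j hj => ?_
  rw [coeff_C_mul]
  rcases h j hj with h | h
  · rw [h, zero_mul]
  · rw [coeff_eq_zero_of_natDegree_lt ((natDegree_eulerPoly_le u j z).trans_lt h), mul_zero]

section Coefficients

variable {k1 k2 : ℂ} {a b : ℕ → ℂ → ℂ} {N M : ℕ} {z : ℂ}

lemma coeff_commPolyNeg_succ {d : ℕ} (hNd : N ≤ d) (hdM : d ≤ M)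
    (hb : ∀ j, d < j → j ≤ M → b j z = 0) (hθb : ∀ j, d < j → j ≤ M → euler (b j) z = 0) :
    (commPolyNeg k1 k2 a b N M z).coeff (d + 1) = 2 * b d z := by
  have hcomp : ((symbol a N z⁻¹).comp (-X)).coeff (d + 1) = 0 := by
    refine coeff_eq_zero_of_degree_lt ?_
    rw [degree_comp_neg_X]
    exact (degree_le_of_natDegree_le (natDegree_symbol_le a N z⁻¹)).trans_lt
      (by exact_mod_cast Nat.lt_succ_of_le hNd)
  have hA := coeff_sum_C_mul_eulerPoly_eq_zero (c := fun i => a i z)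
    (fun w => -cherednikWeight k1 k2 w) z (s := Finset.range (N + 1)) (k := d + 1) fun i hi =>
      Or.inr (by simp only [Finset.mem_range] at hi; omega)
  have hB := coeff_sum_C_mul_eulerPoly_eq_zero (c := fun j => b j z)
    (fun w => cherednikWeight k1 k2 w⁻¹) z (s := Finset.range (M + 1)) (k := d + 1) fun j hj => by
      simp only [Finset.mem_range] at hj
      by_cases hjd : j ≤ d
      · exact Or.inr (by omega)
      · exact Or.inl (hb j (by omega) (by omega))
  simp only [commPolyNeg, actPoly, coeff_add, coeff_sub, add_mul, mul_assoc, coeff_ofNat_mul,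
    coeff_X_mul, coeff_C_mul, coeff_symbol, hcomp, hA, hB, if_pos hdM]
  split_ifs with h
  · rw [hθb _ d.lt_succ_self h, hb _ d.lt_succ_self h]
    ring
  · ring

lemma coeff_commPolyPos_self (hb : ∀ j, N ≤ j → j ≤ M → b j z = 0)
    (hb' : ∀ j, N ≤ j → j ≤ M → b j z⁻¹ = 0) :
    (commPolyPos k1 k2 a b N M z).coeff N = euler (a N) z := by
  have hcomp : ((symbol b M z⁻¹).comp (-X)).coeff N = 0 := by
    refine coeff_eq_zero_of_degree_lt ?_
    rw [degree_comp_neg_X, degree_lt_iff_coeff_zero]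
    intro j hj
    rw [coeff_symbol]
    split_ifs with h
    · exact hb' j (by exact_mod_cast hj) h
    · rfl
  have hA := coeff_sum_C_mul_eulerPoly_eq_zero (c := fun i => a i z)
    (cherednikWeight k1 k2) z (s := Finset.range N) (k := N) fun i hi =>
      Or.inr (Finset.mem_range.mp hi)
  have hB := coeff_sum_C_mul_eulerPoly_eq_zero (c := fun j => b j z)
    (fun w => -cherednikWeight k1 k2 w⁻¹) z (s := Finset.range (M + 1)) (k := N) fun j hj => by
      simp only [Finset.mem_range] at hj
      by_cases hjN : j < N
      · exact Or.inr hjN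
      · exact Or.inl (hb j (by omega) (by omega))
  simp only [commPolyPos, actPoly, Finset.sum_range_succ _ N, coeff_add, coeff_sub, coeff_C_mul,
    coeff_symbol, hcomp, hA, hB, coeff_eulerPoly_self, le_refl, if_true]
  ring

end Coefficients

def CommutesOnMonomials (k1 k2 : ℂ) (a b : ℕ → ℂ → ℂ) (N M : ℕ) : Prop :=
  ∀ n : ℕ, ∀ z ∈ regLocus, cherednik k1 k2 (act a b N M (fun w => w ^ n)) z
    = act a b N M (cherednik k1 k2 (fun w => w ^ n)) z

section Centralizer

variable {k1 k2 : ℂ} {a b : ℕ → ℂ → ℂ} {N M : ℕ}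

lemma commPoly_eq_zero (ha : ∀ i, DifferentiableOn ℂ (a i) regLocus)
    (hb : ∀ j, DifferentiableOn ℂ (b j) regLocus) (hcomm : CommutesOnMonomials k1 k2 a b N M)
    {z : ℂ} (hz : 1 < ‖z‖) : commPolyPos k1 k2 a b N M z = 0 ∧ commPolyNeg k1 k2 a b N M z = 0 :=
  eq_zero_of_eval_mul_zpow_add_eq_zero hz fun n => by
    rw [← cherednik_act_sub_act_cherednik_pow ha hb (mem_regLocus_of_one_lt_norm hz),
      hcomm n z (mem_regLocus_of_one_lt_norm hz), sub_self]

lemma reflection_coeff_eqOn_zero (ha : ∀ i, DifferentiableOn ℂ (a i) regLocus)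
    (hb : ∀ j, DifferentiableOn ℂ (b j) regLocus) (hcomm : CommutesOnMonomials k1 k2 a b N M) :
    ∀ d, N ≤ d → d ≤ M → EqOn (b d) 0 regLocus := by
  intro d
  induction hk : M - d using Nat.strong_induction_on generalizing d with
  | _ k ih =>
    intro hNd hdM
    have hvanish : ∀ j, d < j → j ≤ M → EqOn (b j) 0 regLocus := fun j hdj hjM =>
      ih (M - j) (by omega) j rfl (by omega) hjM
    refine eqOn_zero_of_one_lt_norm (hb d) fun z hz => ?_
    have hz' := mem_regLocus_of_one_lt_norm hz
    have h := congrArg (coeff · (d + 1)) (commPoly_eq_zero ha hb hcomm hz).2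
    rw [coeff_commPolyNeg_succ hNd hdM (fun j hdj hjM => hvanish j hdj hjM hz') fun j hdj hjM => by
      rw [euler_congr (hvanish j hdj hjM) isOpen_regLocus hz']
      exact congrFun euler_zero z, coeff_zero] at h
    simpa using h

lemma euler_leading_coeff_eqOn_zero (ha : ∀ i, DifferentiableOn ℂ (a i) regLocus)
    (hb : ∀ j, DifferentiableOn ℂ (b j) regLocus) (hcomm : CommutesOnMonomials k1 k2 a b N M) :
    EqOn (euler (a N)) 0 regLocus := by
  have hvanish := reflection_coeff_eqOn_zero ha hb hcomm
  refine eqOn_zero_of_one_lt_norm (differentiableOn_euler (ha N) isOpen_regLocus) fun z hz => ?_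
  have hz' := mem_regLocus_of_one_lt_norm hz
  have h := congrArg (coeff · N) (commPoly_eq_zero ha hb hcomm hz).1
  rwa [coeff_commPolyPos_self (fun j hNj hjM => hvanish j hNj hjM hz')
    (fun j hNj hjM => hvanish j hNj hjM (inv_mem_regLocus hz')), coeff_zero] at h

end Centralizer

theorem stmt19_general (k1 k2 : ℂ) (N M : ℕ) (a b : ℕ → ℂ → ℂ)
    (ha : ∀ i, IsLocLaurent (a i)) (hb : ∀ j, IsLocLaurent (b j))
    (hcomm : ∀ f : ℂ → ℂ, IsLaurent f → ∀ z : ℂ, z ≠ 0 → z ^ 2 ≠ 1 →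
      cherednik k1 k2 (act a b N M f) z = act a b N M (cherednik k1 k2 f) z) :
    (∀ j, j ≤ M → (∃ z : ℂ, z ≠ 0 ∧ z ^ 2 ≠ 1 ∧ b j z ≠ 0) → j < N) ∧
    (∀ z : ℂ, z ≠ 0 → z ^ 2 ≠ 1 → z * deriv (a N) z = 0) ∧
    (∃ c : ℂ, ∀ z : ℂ, z ≠ 0 → z ^ 2 ≠ 1 → a N z = c) := by
  have ha' i := (ha i).differentiableOn
  have hb' j := (hb j).differentiableOn
  have hcomm' : CommutesOnMonomials k1 k2 a b N M := fun n z hz =>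
    hcomm _ ⟨X ^ n, 0, by simp⟩ z (mem_regLocus.mp hz).1 (mem_regLocus.mp hz).2
  have hθa := euler_leading_coeff_eqOn_zero ha' hb' hcomm'
  refine ⟨fun j hjM ⟨z, hz₀, hz₁, hbz⟩ => ?_, fun z hz₀ hz₁ => hθa (mem_regLocus.mpr ⟨hz₀, hz₁⟩),
    ?_⟩
  · by_contra! hNj
    exact hbz (reflection_coeff_eqOn_zero ha' hb' hcomm' j hNj hjM (mem_regLocus.mpr ⟨hz₀, hz₁⟩))
  · obtain ⟨c, hc⟩ := isOpen_regLocus.exists_is_const_of_deriv_eq_zero isPreconnected_regLocus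
      (ha' N) fun z hz => (mul_eq_zero.mp (hθa hz)).resolve_left (mem_regLocus.mp hz).1
    exact ⟨c, fun z hz₀ hz₁ => hc z (mem_regLocus.mpr ⟨hz₀, hz₁⟩)⟩

/-- If a differential-reflection operator
`𝒟 = ∑_{i≤N} aᵢ(z)(z∂z)ⁱ + ∑_{j≤M} bⱼ(z)(z∂z)ʲ s` with coefficients in `ℂ_Δ[z^±]`
commutes with the Cherednik operator `D_k`, then every nonzero reflection coefficient `bⱼ`
has `j < N` (so the reflection-part order is at most `N - 1`), and the leading coefficient
`a_N` satisfies `z∂z(a_N) = 0`, hence is constant. -/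
theorem stmt19 (k1 k2 : ℂ) (N M : ℕ) (a b : ℕ → ℂ → ℂ)
    (ha : ∀ i, IsLocLaurent (a i)) (hb : ∀ j, IsLocLaurent (b j))
    (haN : ∃ z : ℂ, z ≠ 0 ∧ z ^ 2 ≠ 1 ∧ a N z ≠ 0)
    (hcomm : ∀ f : ℂ → ℂ, IsLaurent f → ∀ z : ℂ, z ≠ 0 → z ^ 2 ≠ 1 →
      cherednik k1 k2 (act a b N M f) z = act a b N M (cherednik k1 k2 f) z) :
    (∀ j, j ≤ M → (∃ z : ℂ, z ≠ 0 ∧ z ^ 2 ≠ 1 ∧ b j z ≠ 0) → j < N) ∧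
    (∀ z : ℂ, z ≠ 0 → z ^ 2 ≠ 1 → z * deriv (a N) z = 0) ∧
    (∃ c : ℂ, ∀ z : ℂ, z ≠ 0 → z ^ 2 ≠ 1 → a N z = c) :=
  stmt19_general k1 k2 N M a b ha hb hcomm
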